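/- arXiv:1703.04113 — 2 statements merged into one kernel-verified Lean document; each statement's English description precedes it below -/
import Mathlib

section
/- Let Y ⊆ ℝ^d be compact and convex and M : ℝ^d → ℝ^d continuous. Then the solution set SOL(Y, M) = { y* ∈ Y : ⟨M(y*), y − y*⟩ ≥ 0 for all y ∈ Y } is nonempty and compact. -/
open RealInnerProductSpace

open Set Metric Filter Topology MeasureTheory Polynomial Function
open scoped ContDiff

/-!
The solutions of the variational inequality are the fixed points of `y ↦ P (y - M y)`, where `P`
is the (1-Lipschitz) metric projection onto `Y`. They form a closed subset of `Y`, and a fixed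
point exists by Brouwer's theorem.

Brouwer's theorem is proved analytically. A fixed-point-free C¹ self-map of the unit ball gives
a C¹ retraction `r` of a neighbourhood of the ball onto the sphere. For small `t`,
`x ↦ x + t • (r x - x)` is an orientation-preserving diffeomorphism of the ball, so the integral
of `det (1 + t • (Dr - 1))` over the ball is its volume. This integral is a polynomial in `t`,
hence it is still the volume at `t = 1`, where it vanishes because `r` takes values in the sphere
and so `det Dr = 0`. Continuous maps are handled by smooth approximation, and compact convex
sets by projecting onto them from a large ball.
-/

section Projection

variable {E : Type*} [NormedAddCommGroup E] [InnerProductSpace ℝ E]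

theorem norm_sub_le_of_forall_inner_le_zero {K : Set E} {u v p q : E} (hp : p ∈ K) (hq : q ∈ K)
    (hpu : ∀ w ∈ K, ⟪u - p, w - p⟫ ≤ 0) (hqv : ∀ w ∈ K, ⟪v - q, w - q⟫ ≤ 0) :
    ‖p - q‖ ≤ ‖u - v‖ := by
  have hsplit : ⟪u - v, p - q⟫ = ⟪p - q, p - q⟫ + ⟪u - p, p - q⟫ - ⟪v - q, p - q⟫ := by
    rw [← inner_add_left, ← inner_sub_left]; congr 1; abel
  have hup : ⟪u - p, q - p⟫ = -⟪u - p, p - q⟫ := by rw [← neg_sub p q, inner_neg_right]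
  have key : ‖p - q‖ ^ 2 ≤ ‖u - v‖ * ‖p - q‖ :=
    calc ‖p - q‖ ^ 2 ≤ ⟪u - v, p - q⟫ := by
          rw [hsplit, real_inner_self_eq_norm_sq]; linarith [hpu q hq, hqv p hp]
      _ ≤ ‖u - v‖ * ‖p - q‖ := real_inner_le_norm _ _
  nlinarith [norm_nonneg (p - q), norm_nonneg (u - v)]

theorem Convex.exists_continuous_metricProjection [CompleteSpace E] {K : Set E}
    (hconv : Convex ℝ K) (hne : K.Nonempty) (hcl : IsClosed K) :
    ∃ P : E → E, Continuous P ∧ ∀ u, P u ∈ K ∧ ∀ w ∈ K, ⟪u - P u, w - P u⟫ ≤ 0 := by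
  have hproj (u : E) : ∃ p ∈ K, ∀ w ∈ K, ⟪u - p, w - p⟫ ≤ 0 := by
    obtain ⟨p, hp, hmin⟩ := exists_norm_eq_iInf_of_complete_convex hne hcl.isComplete hconv u
    exact ⟨p, hp, (norm_eq_iInf_iff_real_inner_le_zero hconv hp).1 hmin⟩
  choose P hPK hP using hproj
  refine ⟨P, LipschitzWith.continuous (K := 1) fun u v => ?_, fun u => ⟨hPK u, hP u⟩⟩
  simpa [edist_dist, dist_eq_norm] using
    ENNReal.ofReal_le_ofReal (norm_sub_le_of_forall_inner_le_zero (hPK u) (hPK v) (hP u) (hP v))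

end Projection

theorem ContinuousLinearMap.det_one_add_pos_of_norm_lt_one {E : Type*} [NormedAddCommGroup E]
    [NormedSpace ℝ E] [FiniteDimensional ℝ E] {T : E →L[ℝ] E} (hT : ‖T‖ < 1) :
    0 < (1 + T).det := by
  have hne : ∀ s ∈ Icc (0 : ℝ) 1, (1 + s • T).det ≠ 0 := by
    intro s hs
    have hsT : ‖-(s • T)‖ < 1 := by
      rw [norm_neg, norm_smul, Real.norm_of_nonneg hs.1]
      nlinarith [hs.2, norm_nonneg T]
    have hunit : IsUnit (1 + s • T) := by simpa using isUnit_one_sub_of_norm_lt_one hsT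
    exact ((LinearMap.isUnit_iff_isUnit_det _).1 (hunit.map toLinearMapRingHom)).ne_zero
  by_contra! hle
  have hcont : ContinuousOn (fun s : ℝ => (1 + s • T).det) (Icc 0 1) :=
    (continuous_det.comp (by fun_prop)).continuousOn
  obtain ⟨s, hs, hs0⟩ := intermediate_value_Icc' zero_le_one hcont
    ⟨by simpa using hle, by simp [ContinuousLinearMap.det]⟩
  exact hne s hs hs0

theorem LinearMap.exists_natDegree_le_eval_eq_det_one_add_smul {K V : Type*} [Field K]
    [AddCommGroup V] [Module K V] [FiniteDimensional K V] (f : V →ₗ[K] V) :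
    ∃ p : K[X], p.natDegree ≤ Module.finrank K V ∧ ∀ t, p.eval t = LinearMap.det (1 + t • f) := by
  set b := Module.finBasis K V
  set N := LinearMap.toMatrix b b f
  refine ⟨((X : K[X]) • N.map C + (1 : Matrix (Fin _) (Fin _) K).map C).det, ?_, fun t => ?_⟩
  · simpa using natDegree_det_X_add_C_le N 1
  · rw [← LinearMap.det_toMatrix b, map_add, map_smul, LinearMap.toMatrix_one, ← coe_evalRingHom,
      RingHom.map_det]
    congr 1
    ext i j
    by_cases h : i = j <;> simp [h, N] <;> ring

theorem exists_eval_eq_integral_of_natDegree_le {α : Type*} [MeasurableSpace α] {μ : Measure α}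
    {f : ℝ → α → ℝ} (n : ℕ) (hpoly : ∀ x, ∃ p : ℝ[X], p.natDegree ≤ n ∧ ∀ t, p.eval t = f t x)
    (hint : ∀ t, Integrable (f t) μ) :
    ∃ P : ℝ[X], ∀ t, P.eval t = ∫ x, f t x ∂μ := by
  classical
  -- Lagrange interpolation at the nodes `0, …, n` commutes with integration
  set s := Finset.range (n + 1)
  have hinj : Set.InjOn (Nat.cast : ℕ → ℝ) s := fun i _ j _ h => Nat.cast_injective h
  refine ⟨Lagrange.interpolate s Nat.cast fun i => ∫ x, f i x ∂μ, fun t => ?_⟩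
  have hf (x : α) : f t x = ∑ i ∈ s, f i x * (Lagrange.basis s Nat.cast i).eval t := by
    obtain ⟨p, hp, hpf⟩ := hpoly x
    have hdeg : p.degree < s.card := by
      rw [Finset.card_range]
      exact (degree_le_of_natDegree_le hp).trans_lt (WithBot.coe_lt_coe.2 n.lt_succ_self)
    rw [← hpf, Lagrange.eq_interpolate hinj hdeg, Lagrange.interpolate_apply, eval_finsetSum]
    simp [hpf]
  simp_rw [hf]
  rw [integral_finsetSum _ fun (i : ℕ) _ =>
    (hint i).mul_const ((Lagrange.basis s Nat.cast i).eval t)]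
  simp [Lagrange.interpolate_apply, eval_finsetSum, integral_mul_const]

theorem injOn_add_smul_of_norm_sub_le {E : Type*} [NormedAddCommGroup E] [NormedSpace ℝ E]
    {s : Set E} {h : E → E} {C t : ℝ} (hh : ∀ x ∈ s, ∀ y ∈ s, ‖h y - h x‖ ≤ C * ‖y - x‖)
    (ht : 0 ≤ t) (htC : t * C < 1) : InjOn (fun x => x + t • h x) s := by
  intro x hx y hy hxy
  have hyx : y - x = t • (h x - h y) := by
    simp only at hxy
    linear_combination (norm := module) -hxy
  have hle : ‖y - x‖ ≤ t * C * ‖y - x‖ := by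
    calc ‖y - x‖ = t * ‖h x - h y‖ := by rw [hyx, norm_smul, Real.norm_of_nonneg ht]
      _ ≤ t * (C * ‖y - x‖) := by
          gcongr; simpa [norm_sub_rev] using hh y hy x hx
      _ = t * C * ‖y - x‖ := by ring
  have : ‖y - x‖ = 0 := by nlinarith [norm_nonneg (y - x)]
  exact (sub_eq_zero.1 (norm_eq_zero.1 this)).symm

theorem IsCompact.exists_contDiff_dist_lt {E F : Type*} [NormedAddCommGroup E] [NormedSpace ℝ E]
    [FiniteDimensional ℝ E] [NormedAddCommGroup F] [NormedSpace ℝ F] [CompleteSpace F]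
    {K : Set E} (hK : IsCompact K) {f : E → F} (hf : Continuous f) {ε : ℝ} (hε : 0 < ε) :
    ∃ g : E → F, ContDiff ℝ ∞ g ∧ ∀ x ∈ K, dist (g x) (f x) < ε := by
  have hdense := ContinuousMap.dense_setOfPred_contDiff (E := E) (F := F) ⟨f, hf⟩
  rw [mem_closure_iff_nhds_basis
    (nhds_basis_uniformity uniformity_basis_dist.compactConvergenceUniformity)] at hdense
  obtain ⟨g, hg, hgK⟩ := hdense (K, ε) ⟨hK, hε⟩
  exact ⟨g, hg, fun x hx => hgK x hx⟩

theorem IsCompact.exists_isFixedPt_of_forall_exists_dist_lt {X : Type*} [MetricSpace X]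
    {K : Set X} (hK : IsCompact K) {g : X → X} (hg : ContinuousOn g K)
    (happrox : ∀ ε > 0, ∃ x ∈ K, dist (g x) x < ε) : ∃ x ∈ K, IsFixedPt g x := by
  obtain ⟨x₀, hx₀, -⟩ := happrox 1 one_pos
  obtain ⟨x, hx, hmin⟩ := hK.exists_isMinOn ⟨x₀, hx₀⟩
    (continuous_dist.comp_continuousOn (hg.prodMk continuousOn_id))
  refine ⟨x, hx, dist_eq_zero.1 ?_⟩
  by_contra hne
  obtain ⟨y, hy, hlt⟩ := happrox _ (dist_nonneg.lt_of_ne' hne)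
  exact (hmin hy).not_gt hlt

section Ball

variable {E : Type*} [NormedAddCommGroup E] [NormedSpace ℝ E] [FiniteDimensional ℝ E]

theorem image_closedBall_eq_of_isOpen_image_ball {φ : E → E} {a : E} {ρ : ℝ} (hρ : 0 < ρ)
    (hφ : ContinuousOn φ (closedBall a ρ)) (hball : MapsTo φ (ball a ρ) (ball a ρ))
    (hopen : IsOpen (φ '' ball a ρ)) (hsphere : EqOn φ id (sphere a ρ)) :
    φ '' closedBall a ρ = closedBall a ρ := by
  set V := φ '' ball a ρ
  have himage : φ '' closedBall a ρ ⊆ V ∪ sphere a ρ := by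
    rw [← ball_union_sphere, image_union]
    exact union_subset_union_right _ fun _ ⟨x, hx, hφx⟩ => hφx ▸ (hsphere hx).symm ▸ hx
  have hclosure : closure V ⊆ φ '' closedBall a ρ :=
    ((isCompact_closedBall a ρ).image_of_continuousOn hφ).isClosed.closure_subset_iff.2
      (image_mono ball_subset_closedBall)
  -- `V` is open and relatively closed in the connected ball, and meets it at `φ a`
  have hballV : ball a ρ ⊆ V := by
    refine (convex_ball a ρ).isPreconnected.subset_left_of_subset_union hopen
      isClosed_closure.isOpen_compl (disjoint_compl_right.mono_left subset_closure) ?_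
      ⟨φ a, hball (mem_ball_self hρ), mem_image_of_mem φ (mem_ball_self hρ)⟩
    intro y hy
    by_cases hyV : y ∈ closure V
    · rcases himage (hclosure hyV) with h | h
      · exact Or.inl h
      · exact absurd h (ne_of_lt (mem_ball.1 hy))
    · exact Or.inr hyV
  refine (himage.trans ?_).antisymm ?_
  · exact union_subset ((image_subset_iff.2 hball).trans ball_subset_closedBall)
      sphere_subset_closedBall
  · calc closedBall a ρ = closure (ball a ρ) := (closure_ball a hρ.ne').symm
      _ ⊆ closure V := closure_mono hballV
      _ ⊆ φ '' closedBall a ρ := hclosure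

theorem setIntegral_det_eq_measureReal_closedBall [MeasurableSpace E] [BorelSpace E]
    (μ : Measure E) [μ.IsAddHaarMeasure] {φ : E → E} {φ' : E → E →L[ℝ] E} {a : E} {ρ : ℝ}
    (hρ : 0 < ρ) (hφ : ∀ x ∈ closedBall a ρ, HasStrictFDerivAt φ (φ' x) x)
    (hdet : ∀ x ∈ closedBall a ρ, 0 < (φ' x).det) (hinj : InjOn φ (closedBall a ρ))
    (hball : MapsTo φ (ball a ρ) (ball a ρ)) (hsphere : EqOn φ id (sphere a ρ)) :
    ∫ x in closedBall a ρ, (φ' x).det ∂μ = μ.real (closedBall a ρ) := by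
  have hopen : IsOpen (φ '' ball a ρ) := by
    rw [isOpen_iff_mem_nhds]
    rintro _ ⟨x, hx, rfl⟩
    have hx' := ball_subset_closedBall hx
    have hsurj : (φ' x).range = ⊤ := LinearMap.range_eq_top.2
      (LinearMap.equivOfDetNeZero (φ' x).toLinearMap (hdet x hx').ne').surjective
    rw [← (hφ x hx').map_nhds_eq_of_surj hsurj]
    exact image_mem_map (isOpen_ball.mem_nhds hx)
  have himage := image_closedBall_eq_of_isOpen_image_ball hρ
    (fun x hx => (hφ x hx).continuousAt.continuousWithinAt) hball hopen hsphere
  calc ∫ x in closedBall a ρ, (φ' x).det ∂μ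
      = ∫ x in closedBall a ρ, |(φ' x).det| • (1 : ℝ) ∂μ :=
        setIntegral_congr_fun measurableSet_closedBall fun x hx => by
          simp [abs_of_pos (hdet x hx)]
    _ = ∫ x in φ '' closedBall a ρ, (1 : ℝ) ∂μ :=
        (integral_image_eq_integral_abs_det_fderiv_smul μ measurableSet_closedBall
          (fun x hx => (hφ x hx).hasFDerivAt.hasFDerivWithinAt) hinj fun _ => (1 : ℝ)).symm
    _ = μ.real (closedBall a ρ) := by simp [himage]

theorem setIntegral_det_one_add_smul_sub_one_eq_measureReal [MeasurableSpace E] [BorelSpace E]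
    (μ : Measure E) [μ.IsAddHaarMeasure] {r : E → E} {r' : E → E →L[ℝ] E} {L t : ℝ}
    (hr : ∀ x ∈ closedBall (0 : E) 1, HasStrictFDerivAt r (r' x) x)
    (hL : ∀ x ∈ closedBall (0 : E) 1, ‖r' x - 1‖ ≤ L)
    (hmaps : MapsTo r (closedBall 0 1) (closedBall 0 1)) (hsphere : EqOn r id (sphere 0 1))
    (ht0 : 0 ≤ t) (ht1 : t < 1) (htL : t * L < 1) :
    ∫ x in closedBall (0 : E) 1, (1 + t • (r' x - 1)).det ∂μ = μ.real (closedBall 0 1) := by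
  refine setIntegral_det_eq_measureReal_closedBall μ one_pos
    (φ := fun x => x + t • (r x - x)) (fun x hx => ?_) (fun x hx => ?_) ?_ (fun x hx => ?_)
    (fun x hx => by simp [hsphere hx])
  · exact (hasStrictFDerivAt_id x).add (((hr x hx).sub (hasStrictFDerivAt_id x)).const_smul t)
  · refine ContinuousLinearMap.det_one_add_pos_of_norm_lt_one ?_
    rw [norm_smul, Real.norm_of_nonneg ht0]
    nlinarith [hL x hx, norm_nonneg (r' x - 1)]
  · refine injOn_add_smul_of_norm_sub_le (fun x hx y hy => ?_) ht0 htL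
    simpa [sub_sub_sub_comm] using
      (convex_closedBall (0 : E) 1).norm_image_sub_le_of_norm_hasFDerivWithin_le'
        (fun z hz => (hr z hz).hasFDerivAt.hasFDerivWithinAt) hL hx hy
  · have hx1 : ‖x‖ < 1 := mem_ball_zero_iff.1 hx
    have hr1 : ‖r x‖ ≤ 1 := mem_closedBall_zero_iff.1 (hmaps (ball_subset_closedBall hx))
    simp only [mem_ball_zero_iff]
    rw [show x + t • (r x - x) = (1 - t) • x + t • r x by module]
    calc ‖(1 - t) • x + t • r x‖ ≤ (1 - t) * ‖x‖ + t * ‖r x‖ := by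
          refine (norm_add_le _ _).trans_eq ?_
          rw [norm_smul, norm_smul, Real.norm_of_nonneg (by linarith), Real.norm_of_nonneg ht0]
      _ < 1 := by nlinarith

end Ball

section Brouwer

variable {E : Type*} [NormedAddCommGroup E] [InnerProductSpace ℝ E]

theorem inner_sub_pos_of_norm_le_of_ne {x y : E} (hy : ‖y‖ ≤ ‖x‖) (hne : y ≠ x) :
    0 < ⟪x, x - y⟫ := by
  have hsq : 2 * ⟪x, x - y⟫ = ‖x - y‖ ^ 2 + (‖x‖ ^ 2 - ‖y‖ ^ 2) := by
    rw [norm_sub_sq_real, inner_sub_right, real_inner_self_eq_norm_sq]; ring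
  have hpos : 0 < ‖x - y‖ := norm_pos_iff.2 (sub_ne_zero.2 hne.symm)
  nlinarith [norm_nonneg y]

noncomputable def sphereDisc (x v : E) : ℝ := ⟪x, v⟫ ^ 2 + (1 - ‖x‖ ^ 2) * ‖v‖ ^ 2

/-- The larger root `s` of `‖x + s • v‖ = 1`, a quadratic equation in `s` with discriminant
`4 * sphereDisc x v`. -/
noncomputable def sphereExitTime (x v : E) : ℝ := (√(sphereDisc x v) - ⟪x, v⟫) / ‖v‖ ^ 2

theorem norm_add_sphereExitTime_smul {x v : E} (hv : v ≠ 0) (hd : 0 ≤ sphereDisc x v) :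
    ‖x + sphereExitTime x v • v‖ = 1 := by
  have hn : 0 < ‖v‖ ^ 2 := by positivity
  have hq : √(sphereDisc x v) ^ 2 = ⟪x, v⟫ ^ 2 + (1 - ‖x‖ ^ 2) * ‖v‖ ^ 2 := Real.sq_sqrt hd
  have hsq : ‖x + sphereExitTime x v • v‖ ^ 2 = 1 := by
    rw [norm_add_sq_real, inner_smul_right, norm_smul, mul_pow, Real.norm_eq_abs, sq_abs,
      sphereExitTime]
    field_simp
    linear_combination hq
  exact (pow_eq_one_iff_of_nonneg (norm_nonneg _) two_ne_zero).1 hsq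

theorem sphereExitTime_eq_zero {x v : E} (hx : ‖x‖ = 1) (hxv : 0 ≤ ⟪x, v⟫) :
    sphereExitTime x v = 0 := by
  simp [sphereExitTime, sphereDisc, hx, Real.sqrt_sq hxv]

theorem ContDiffAt.sphereExitTime {G : Type*} [NormedAddCommGroup G] [NormedSpace ℝ G]
    {n : WithTop ℕ∞} {f w : G → E} {y : G} (hf : ContDiffAt ℝ n f y) (hw : ContDiffAt ℝ n w y)
    (hv : w y ≠ 0) (hd : 0 < sphereDisc (f y) (w y)) :
    ContDiffAt ℝ n (fun z => sphereExitTime (f z) (w z)) y := by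
  have hdisc : ContDiffAt ℝ n (fun z => sphereDisc (f z) (w z)) y :=
    ((hf.inner ℝ hw).pow 2).add ((contDiffAt_const.sub (hf.norm_sq ℝ)).mul (hw.norm_sq ℝ))
  exact ((hdisc.sqrt hd.ne').sub (hf.inner ℝ hw)).div (hw.norm_sq ℝ) (by positivity)

variable [FiniteDimensional ℝ E]

theorem det_fderiv_eq_zero_of_eventually_norm_eq_one {r : E → E} {x : E}
    (hr : DifferentiableAt ℝ r x) (hnorm : ∀ᶠ y in 𝓝 x, ‖r y‖ = 1) :
    (fderiv ℝ r x).det = 0 := by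
  -- differentiating `⟪r, r⟫ = 1` shows that `r x ≠ 0` is orthogonal to the range of the derivative
  have hconst : (fun y => ⟪r y, r y⟫) =ᶠ[𝓝 x] fun _ => (1 : ℝ) := by
    filter_upwards [hnorm] with y hy
    rw [real_inner_self_eq_norm_sq, hy, one_pow]
  have horth (v : E) : ⟪r x, fderiv ℝ r x v⟫ = 0 := by
    have hD := (hr.hasFDerivAt.inner ℝ hr.hasFDerivAt).fderiv
    rw [hconst.fderiv_eq, fderiv_fun_const] at hD
    have := congr($hD v)
    simp only [Pi.zero_apply, zero_apply, ContinuousLinearMap.comp_apply,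
      ContinuousLinearMap.prod_apply, fderivInnerCLM_apply] at this
    rw [real_inner_comm (r x) (fderiv ℝ r x v)] at this
    linarith
  by_contra hdet
  obtain ⟨v, hv⟩ := (LinearMap.equivOfDetNeZero (fderiv ℝ r x).toLinearMap hdet).surjective (r x)
  have := horth v
  rw [show fderiv ℝ r x v = r x from hv, real_inner_self_eq_norm_sq, hnorm.self_of_nhds] at this
  norm_num at this

theorem exists_norm_ne_one_of_contDiffOn {U : Set E} {r : E → E} (hU : IsOpen U)
    (hBU : closedBall (0 : E) 1 ⊆ U) (hr : ContDiffOn ℝ 1 r U)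
    (hsphere : EqOn r id (sphere 0 1)) : ∃ x ∈ U, ‖r x‖ ≠ 1 := by
  by_contra! hnorm
  borelize E
  set μ : Measure E := Measure.addHaar
  set B := closedBall (0 : E) 1
  set A : E → E →L[ℝ] E := fun x => fderiv ℝ r x - 1
  have hr' : ∀ x ∈ U, HasStrictFDerivAt r (fderiv ℝ r x) x := fun x hx =>
    (hr.contDiffAt (hU.mem_nhds hx)).hasStrictFDerivAt one_ne_zero
  have hA : ContinuousOn A B :=
    ((hr.continuousOn_fderiv_of_isOpen hU le_rfl).mono hBU).sub continuousOn_const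
  obtain ⟨L, hL⟩ := (isCompact_closedBall (0 : E) 1).exists_bound_of_continuousOn hA
  have hL0 : 0 ≤ L := (norm_nonneg _).trans (hL 0 (mem_closedBall_self zero_le_one))
  set t₀ := (L + 2)⁻¹
  have ht₀ : 0 < t₀ := by positivity
  have hvol : ∀ t ∈ Icc 0 t₀, ∫ x in B, (1 + t • A x).det ∂μ = μ.real B := by
    rintro t ⟨ht0, ht⟩
    have htL : t * L < 1 := by
      calc t * L ≤ t₀ * L := by gcongr
        _ < 1 := by rw [inv_mul_lt_one₀ (by positivity)]; linarith
    refine setIntegral_det_one_add_smul_sub_one_eq_measureReal μ (fun x hx => hr' x (hBU hx)) hL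
      (fun x hx => ?_) hsphere ht0 (ht.trans_lt (inv_lt_one_of_one_lt₀ (by linarith))) htL
    exact mem_closedBall_zero_iff.2 (hnorm x (hBU hx)).le
  have hzero : ∫ x in B, (1 + (1 : ℝ) • A x).det ∂μ = 0 := by
    refine setIntegral_eq_zero_of_forall_eq_zero fun x hx => ?_
    rw [one_smul, add_sub_cancel]
    exact det_fderiv_eq_zero_of_eventually_norm_eq_one (hr' x (hBU hx)).differentiableAt
      (eventually_of_mem (hU.mem_nhds (hBU hx)) hnorm)
  obtain ⟨P, hP⟩ := exists_eval_eq_integral_of_natDegree_le (μ := μ.restrict B)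
    (f := fun t x => (1 + t • A x).det) (Module.finrank ℝ E)
    (fun x => (A x).toLinearMap.exists_natDegree_le_eval_eq_det_one_add_smul)
    (fun t => ((ContinuousLinearMap.continuous_det.comp_continuousOn
      (continuousOn_const.add (hA.const_smul t))).integrableOn_compact
      (isCompact_closedBall 0 1)))
  have hPB : P = Polynomial.C (μ.real B) := eq_of_infinite_eval_eq _ _ <|
    (Icc_infinite ht₀).mono fun t ht => by simp [hP, hvol t ht]
  have hB : 0 < μ.real B := ENNReal.toReal_pos (measure_closedBall_pos μ 0 one_pos).ne'
    measure_closedBall_lt_top.ne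
  have := hP 1
  rw [hPB, eval_C, hzero] at this
  exact hB.ne' this

theorem exists_isFixedPt_closedBall_of_contDiff {g : E → E} (hg : ContDiff ℝ 1 g)
    (hmaps : MapsTo g (closedBall 0 1) (closedBall 0 1)) :
    ∃ x ∈ closedBall (0 : E) 1, IsFixedPt g x := by
  by_contra! hfix
  -- following the ray from `g x` through `x` up to the sphere retracts the ball onto the sphere
  set U := {x : E | x - g x ≠ 0 ∧ 0 < sphereDisc x (x - g x)}
  have hU : IsOpen U := by
    have hw : Continuous fun x => x - g x := continuous_id.sub hg.continuous
    have hd : Continuous fun x => sphereDisc x (x - g x) := by unfold sphereDisc; fun_prop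
    exact (isOpen_compl_singleton.preimage hw).inter (isOpen_lt continuous_const hd)
  have hpos : ∀ x ∈ sphere (0 : E) 1, 0 < ⟪x, x - g x⟫ := fun x hx =>
    inner_sub_pos_of_norm_le_of_ne
      (by simpa [mem_sphere_zero_iff_norm.1 hx] using hmaps (sphere_subset_closedBall hx))
      (hfix x (sphere_subset_closedBall hx))
  have hBU : closedBall 0 1 ⊆ U := by
    intro x hx
    have hne : x - g x ≠ 0 := sub_ne_zero.2 (Ne.symm (hfix x hx))
    refine ⟨hne, ?_⟩
    rcases (mem_closedBall_zero_iff.1 hx).lt_or_eq with h | h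
    · have h1 : 0 < 1 - ‖x‖ ^ 2 := by nlinarith [norm_nonneg x]
      have h2 : 0 < ‖x - g x‖ ^ 2 := by positivity
      exact add_pos_of_nonneg_of_pos (sq_nonneg _) (mul_pos h1 h2)
    · simpa [sphereDisc, h] using pow_pos (hpos x (mem_sphere_zero_iff_norm.2 h)) 2
  have hr : ContDiffOn ℝ 1 (fun x => x + sphereExitTime x (x - g x) • (x - g x)) U := by
    intro x hx
    have hw : ContDiffAt ℝ 1 (fun x => x - g x) x := contDiffAt_id.sub hg.contDiffAt
    exact (contDiffAt_id.add ((contDiffAt_id.sphereExitTime hw hx.1 hx.2).smul hw)).contDiffWithinAt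
  have hsphere : EqOn (fun x => x + sphereExitTime x (x - g x) • (x - g x)) id (sphere 0 1) := by
    intro x hx
    simp [sphereExitTime_eq_zero (mem_sphere_zero_iff_norm.1 hx) (hpos x hx).le]
  obtain ⟨x, hxU, hx⟩ := exists_norm_ne_one_of_contDiffOn hU hBU hr hsphere
  exact hx (norm_add_sphereExitTime_smul hxU.1 hxU.2.le)

theorem exists_isFixedPt_closedBall {g : E → E} (hg : Continuous g)
    (hmaps : MapsTo g (closedBall 0 1) (closedBall 0 1)) :
    ∃ x ∈ closedBall (0 : E) 1, IsFixedPt g x := by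
  refine (isCompact_closedBall 0 1).exists_isFixedPt_of_forall_exists_dist_lt hg.continuousOn
    fun ε hε => ?_
  -- a smooth approximation of `g`, shrunk so as to map the ball into itself, has a fixed point
  set δ := ε / 2
  obtain ⟨h, hh, hhg⟩ := (isCompact_closedBall (0 : E) 1).exists_contDiff_dist_lt hg (half_pos hε)
  have hδ : 0 < 1 + δ := by positivity
  have hnorm : ∀ x ∈ closedBall (0 : E) 1, ‖h x‖ < 1 + δ := fun x hx =>
    calc ‖h x‖ ≤ ‖g x‖ + dist (h x) (g x) := by rw [dist_eq_norm]; exact norm_le_insert' _ _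
      _ < 1 + δ := add_lt_add_of_le_of_lt (mem_closedBall_zero_iff.1 (hmaps hx)) (hhg x hx)
  set k := fun x => (1 + δ)⁻¹ • h x
  have hk : MapsTo k (closedBall 0 1) (closedBall 0 1) := fun x hx => by
    rw [mem_closedBall_zero_iff, norm_smul, norm_inv, Real.norm_of_nonneg hδ.le,
      inv_mul_le_one₀ hδ]
    exact (hnorm x hx).le
  obtain ⟨x, hx, hfix⟩ :=
    exists_isFixedPt_closedBall_of_contDiff ((contDiff_infty.1 hh 1).const_smul _) hk
  have hhk : dist (h x) (k x) < δ := by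
    have hc : 1 - (1 + δ)⁻¹ = δ / (1 + δ) := by field_simp; ring
    rw [dist_eq_norm, show h x - k x = (1 - (1 + δ)⁻¹) • h x by rw [sub_smul, one_smul], hc]
    rw [norm_smul, Real.norm_of_nonneg (by positivity), div_mul_eq_mul_div, div_lt_iff₀ hδ]
    exact mul_lt_mul_of_pos_left (hnorm x hx) (half_pos hε)
  refine ⟨x, hx, ?_⟩
  calc dist (g x) x = dist (g x) (k x) := by rw [show k x = x from hfix]
    _ ≤ dist (g x) (h x) + dist (h x) (k x) := dist_triangle _ _ _
    _ < δ + δ := add_lt_add (by rw [dist_comm]; exact hhg x hx) hhk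
    _ = ε := add_halves ε

theorem IsCompact.exists_isFixedPt_of_convex {K : Set E} (hK : IsCompact K) (hconv : Convex ℝ K)
    (hne : K.Nonempty) {g : E → E} (hg : Continuous g) (hmaps : MapsTo g K K) :
    ∃ x ∈ K, IsFixedPt g x := by
  obtain ⟨P, hPc, hP⟩ := hconv.exists_continuous_metricProjection hne hK.isClosed
  obtain ⟨R, hR, hKR⟩ := hK.isBounded.subset_closedBall_lt 0 (0 : E)
  -- rescaled to the unit ball, `g ∘ P` has a fixed point, which lies in `K`
  set G := fun x : E => R⁻¹ • g (P (R • x))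
  have hG : MapsTo G (closedBall 0 1) (closedBall 0 1) := fun x _ => by
    have := hKR (hmaps (hP (R • x)).1)
    rw [mem_closedBall_zero_iff] at this ⊢
    rw [norm_smul, norm_inv, Real.norm_of_nonneg hR.le, inv_mul_le_one₀ hR]
    exact this
  obtain ⟨x, -, hx⟩ := exists_isFixedPt_closedBall (by fun_prop) hG
  have hgx : g (P (R • x)) = R • x := by
    rw [← smul_inv_smul₀ hR.ne' (g (P (R • x)))]
    exact congrArg (R • ·) hx
  have hxK : R • x ∈ K := hgx ▸ hmaps (hP _).1
  have hPx : P (R • x) = R • x :=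
    (sub_eq_zero.1 (real_inner_self_nonpos.1 ((hP (R • x)).2 _ hxK))).symm
  rw [hPx] at hgx
  exact ⟨R • x, hxK, hgx⟩

end Brouwer

theorem VI_sol_nonempty_compact {d : ℕ}
    (M : EuclideanSpace ℝ (Fin d) → EuclideanSpace ℝ (Fin d))
    (Y : Set (EuclideanSpace ℝ (Fin d)))
    (hYne : Y.Nonempty) (hYc : IsCompact Y) (hYconv : Convex ℝ Y)
    (hM : Continuous M) :
    ({y' ∈ Y | ∀ y ∈ Y, 0 ≤ ⟪M y', y - y'⟫}).Nonempty ∧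
    IsCompact {y' ∈ Y | ∀ y ∈ Y, 0 ≤ ⟪M y', y - y'⟫} := by
  obtain ⟨P, hPc, hP⟩ := hYconv.exists_continuous_metricProjection hYne hYc.isClosed
  constructor
  · obtain ⟨y, hy, hfix⟩ := hYc.exists_isFixedPt_of_convex hYconv hYne
      (g := fun y => P (y - M y)) (by fun_prop) fun y _ => (hP _).1
    refine ⟨y, hy, fun z hz => ?_⟩
    have := (hP (y - M y)).2 z hz
    rw [show P (y - M y) = y from hfix, sub_sub_cancel_left, inner_neg_left] at this
    linarith
  · have hclosed : IsClosed {y' | ∀ y ∈ Y, 0 ≤ ⟪M y', y - y'⟫} := by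
      simp only [Set.ofPred_forall]
      exact isClosed_iInter fun y => isClosed_iInter fun _ =>
        isClosed_le continuous_const (by fun_prop)
    exact hYc.of_isClosed_subset (hYc.isClosed.inter hclosed) (sep_subset _ _)
end

section
/- Let (z_t), (b_t), (ξ_t), (ζ_t) be nonnegative random variables adapted to a filtration (F_t) with E[z_{t+1} | F_t] ≤ z_t(1 + b_t) + ξ_t − ζ_t, and suppose Σ b_t < ∞ and Σ ξ_t < ∞ almost surely. Then almost surely lim_{t→∞} z_t exists and is finite, and Σ ζ_t < ∞. -/
/-!
Dividing by the compounding factor `∏_{s<t} (1 + b_s)`, which converges because `∑ b_t < ∞`,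
turns the recursion into `E[z'_{t+1} | F_t] ≤ z'_t + ξ'_t - ζ'_t`, so that
`X_t = z'_t + ∑_{s<t} (ζ'_s - ξ'_s)` is a supermartingale bounded below by `-∑_{s<t} ξ'_s`.
Stopped just before these partial sums exceed `K`, it is bounded below by `-K`, hence
`L¹`-bounded and convergent; letting `K → ∞` gives convergence wherever `∑ ξ_t < ∞`.
Then `z'_t + ∑_{s<t} ζ'_s` converges with both terms nonnegative, so `∑ ζ'_t < ∞` and `z'_t`
converges, and undoing the normalization gives the claim.
-/

open MeasureTheory Filter Finset Topology

theorem summable_and_exists_tendsto_of_tendsto_add_sum {u v : ℕ → ℝ} {L : ℝ}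
    (hu : ∀ t, 0 ≤ u t) (hv : ∀ t, 0 ≤ v t)
    (h : Tendsto (fun t => u t + ∑ s ∈ range t, v s) atTop (𝓝 L)) :
    Summable v ∧ ∃ l, Tendsto u atTop (𝓝 l) := by
  obtain ⟨M, hM⟩ := h.bddAbove_range
  have hv_sum : Summable v :=
    summable_of_sum_range_le hv fun t => by linarith [hu t, hM (Set.mem_range_self t)]
  refine ⟨hv_sum, L - ∑' s, v s, (h.sub hv_sum.hasSum.tendsto_sum_nat).congr fun t => ?_⟩
  ring

namespace MeasureTheory

variable {Ω : Type*} {m0 : MeasurableSpace Ω} {μ : Measure Ω} {ℱ : Filtration ℕ m0}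

theorem Supermartingale.exists_ae_tendsto_of_le [IsFiniteMeasure μ] {Y : ℕ → Ω → ℝ} {C : ℝ}
    (hY : Supermartingale Y ℱ μ) (hC : ∀ t ω, C ≤ Y t ω) :
    ∀ᵐ ω ∂μ, ∃ c, Tendsto (fun t => Y t ω) atTop (𝓝 c) := by
  have hnorm_le : ∀ t, ∫ ω, ‖Y t ω‖ ∂μ ≤ ∫ ω, Y 0 ω ∂μ + 2 * |C| * μ.real Set.univ := by
    intro t
    calc ∫ ω, ‖Y t ω‖ ∂μ ≤ ∫ ω, (Y t ω + 2 * |C|) ∂μ := by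
          refine integral_mono (hY.integrable t).norm ((hY.integrable t).add (integrable_const _))
            fun ω => ?_
          have := hC t ω
          simp only [Real.norm_eq_abs]
          cases abs_cases (Y t ω) <;> cases abs_cases C <;> linarith
      _ = ∫ ω, Y t ω ∂μ + 2 * |C| * μ.real Set.univ := by
          rw [integral_add (hY.integrable t) (integrable_const _), integral_const, smul_eq_mul,
            mul_comm]
      _ ≤ _ := by
          have := hY.setIntegral_le (Nat.zero_le t) MeasurableSet.univ
          simp only [Measure.restrict_univ] at this
          linarith
  have hbdd : ∀ t, eLpNorm ((-Y) t) 1 μ ≤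
      ENNReal.ofReal (∫ ω, Y 0 ω ∂μ + 2 * |C| * μ.real Set.univ) := fun t => by
    rw [Pi.neg_apply, eLpNorm_neg, eLpNorm_one_eq_lintegral_enorm,
      ← ofReal_integral_norm_eq_lintegral_enorm (hY.integrable t)]
    exact ENNReal.ofReal_le_ofReal (hnorm_le t)
  filter_upwards [hY.neg.exists_ae_tendsto_of_bdd hbdd] with ω ⟨c, hc⟩
  exact ⟨-c, by simpa using hc.neg⟩

theorem Supermartingale.stoppedProcess [IsFiniteMeasure μ] {X : ℕ → Ω → ℝ} {τ : Ω → WithTop ℕ}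
    (hX : Supermartingale X ℱ μ) (hτ : IsStoppingTime ℱ τ) :
    Supermartingale (stoppedProcess X τ) ℱ μ := by
  have := (hX.neg.stoppedProcess hτ).neg
  rwa [stoppedProcess_neg, neg_neg] at this

theorem exists_stoppedProcess_eq {β : Type*} (u : ℕ → Ω → β) (τ : Ω → WithTop ℕ) (t : ℕ) (ω : Ω) :
    ∃ n : ℕ, (n : WithTop ℕ) ≤ τ ω ∧ stoppedProcess u τ t ω = u n ω := by
  rcases le_total (t : WithTop ℕ) (τ ω) with h | h
  · exact ⟨t, h, stoppedProcess_eq_of_le h⟩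
  · obtain ⟨n, hn⟩ := WithTop.ne_top_iff_exists.1 (ne_top_of_le_ne_top WithTop.coe_ne_top h)
    refine ⟨n, hn.le, ?_⟩
    rw [stoppedProcess_eq_of_ge (u := u) (i := t) h, ← hn]
    rfl

theorem Supermartingale.ae_tendsto_of_neg_sum_le [IsFiniteMeasure μ] {X ξ : ℕ → Ω → ℝ}
    (hX : Supermartingale X ℱ μ) (hξ : Adapted ℱ ξ) (hξ_nonneg : ∀ t ω, 0 ≤ ξ t ω)
    (hXξ : ∀ t ω, -∑ s ∈ range t, ξ s ω ≤ X t ω) :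
    ∀ᵐ ω ∂μ, Summable (fun t => ξ t ω) → ∃ c, Tendsto (fun t => X t ω) atTop (𝓝 c) := by
  suffices h : ∀ K : ℕ, ∀ᵐ ω ∂μ, Summable (fun t => ξ t ω) → ∑' t, ξ t ω ≤ K →
      ∃ c, Tendsto (fun t => X t ω) atTop (𝓝 c) by
    filter_upwards [ae_all_iff.2 h] with ω hω hsum
    obtain ⟨K, hK⟩ := exists_nat_ge (∑' t, ξ t ω)
    exact hω K hsum hK
  intro K
  -- `τ` is the first `t` with `∑_{s ≤ t} ξ s > K`, so `∑_{s < τ} ξ s ≤ K` bounds `X` below at `τ`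
  set τ := hittingAfter (fun t ω => ∑ s ∈ range (t + 1), ξ s ω) (Set.Ioi (K : ℝ)) 0
  have hτ : IsStoppingTime ℱ τ := by
    refine Adapted.isStoppingTime_hittingAfter (fun t => ?_) measurableSet_Ioi
    exact Finset.measurable_sum _ fun s hs =>
      (hξ s).mono (ℱ.mono (Nat.lt_succ_iff.mp (mem_range.mp hs))) le_rfl
  have hsum_le : ∀ ω (n : ℕ), (n : WithTop ℕ) ≤ τ ω → ∑ s ∈ range n, ξ s ω ≤ K := by
    rintro ω (_ | n) hn
    · simp
    · have hn : (n : WithTop ℕ) < τ ω := (WithTop.coe_lt_coe.2 n.lt_succ_self).trans_le hn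
      simpa using notMem_of_lt_hittingAfter hn (Nat.zero_le n)
  have hconv := (hX.stoppedProcess hτ).exists_ae_tendsto_of_le (C := -K) fun t ω => by
    obtain ⟨n, hn, heq⟩ := exists_stoppedProcess_eq X τ t ω
    rw [heq]
    linarith [hXξ n ω, hsum_le ω n hn]
  filter_upwards [hconv] with ω hω hsum hK
  have hτ_top : τ ω = ⊤ := hittingAfter_eq_top_iff.2 fun t _ =>
    not_lt.mpr ((hsum.sum_le_tsum _ fun s _ => hξ_nonneg s ω).trans hK)
  simpa [stoppedProcess_eq_of_le, hτ_top] using hω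

theorem supermartingale_sub_sum_of_condExp_le [IsFiniteMeasure μ] {V a : ℕ → Ω → ℝ}
    (hV : Adapted ℱ V) (ha : Adapted ℱ a) (hV_int : ∀ t, Integrable (V t) μ)
    (ha_int : ∀ t, Integrable (a t) μ) (h : ∀ t, μ[V (t + 1) | ℱ t] ≤ᵐ[μ] V t + a t) :
    Supermartingale (fun t ω => V t ω - ∑ s ∈ range t, a s ω) ℱ μ := by
  have hsum_meas : ∀ t, Measurable[ℱ t] fun ω => ∑ s ∈ range (t + 1), a s ω := fun t =>
    Finset.measurable_sum _ fun s hs =>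
      (ha s).mono (ℱ.mono (Nat.lt_succ_iff.mp (mem_range.mp hs))) le_rfl
  have hsum_int : ∀ n, Integrable (fun ω => ∑ s ∈ range n, a s ω) μ := fun n =>
    integrable_finsetSum _ fun s _ => ha_int s
  refine supermartingale_nat (fun t => ?_) (fun t => (hV_int t).sub (hsum_int t)) fun t => ?_
  · exact ((hV t).sub (Finset.measurable_sum _ fun s hs =>
      (ha s).mono (ℱ.mono (mem_range.mp hs).le) le_rfl)).stronglyMeasurable
  · filter_upwards [condExp_sub (m := ℱ t) (hV_int (t + 1)) (hsum_int (t + 1)), h t] with ω hsub hle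
    change μ[V (t + 1) - fun ω => ∑ s ∈ range (t + 1), a s ω | ℱ t] ω ≤ _
    rw [hsub, Pi.sub_apply, condExp_of_stronglyMeasurable (ℱ.le t) (hsum_meas t).stronglyMeasurable
      (hsum_int _)]
    simp only [Pi.add_apply, sum_range_succ] at hle ⊢
    linarith

noncomputable def prodOneAdd (b : ℕ → Ω → ℝ) (t : ℕ) (ω : Ω) : ℝ := ∏ s ∈ range t, (1 + b s ω)

section prodOneAdd

variable {b : ℕ → Ω → ℝ}

theorem prodOneAdd_succ (b : ℕ → Ω → ℝ) (t : ℕ) (ω : Ω) :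
    prodOneAdd b (t + 1) ω = prodOneAdd b t ω * (1 + b t ω) :=
  prod_range_succ _ _

theorem one_le_prodOneAdd (hb : ∀ t ω, 0 ≤ b t ω) (t : ℕ) (ω : Ω) : 1 ≤ prodOneAdd b t ω :=
  Finset.one_le_prod fun s _ => le_add_of_nonneg_right (hb s ω)

theorem Adapted.measurable_prodOneAdd (hb : Adapted ℱ b) {n t : ℕ} (hn : n ≤ t + 1) :
    Measurable[ℱ t] (prodOneAdd b n) :=
  Finset.measurable_prod _ fun s hs => measurable_const.add
    ((hb s).mono (ℱ.mono (Nat.lt_succ_iff.mp ((mem_range.mp hs).trans_le hn))) le_rfl)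

theorem exists_tendsto_prodOneAdd {ω : Ω} (hb : Summable fun t => b t ω) :
    ∃ a, Tendsto (fun t => prodOneAdd b t ω) atTop (𝓝 a) :=
  ⟨_, (Real.multipliable_one_add_of_summable hb).hasProd.tendsto_prod_nat⟩

theorem Integrable.div_prodOneAdd {f : Ω → ℝ} (hf : Integrable f μ) (hb : Adapted ℱ b)
    (hb_nonneg : ∀ t ω, 0 ≤ b t ω) (n : ℕ) :
    Integrable (fun ω => f ω / prodOneAdd b n ω) μ := by
  simp only [div_eq_inv_mul]
  refine hf.bdd_mul (c := 1) ?_ (ae_of_all _ fun ω => ?_)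
  · exact ((hb.measurable_prodOneAdd n.le_succ).inv.mono (ℱ.le n) le_rfl).aestronglyMeasurable
  · rw [norm_inv, Real.norm_of_nonneg (zero_le_one.trans (one_le_prodOneAdd hb_nonneg n ω))]
    exact inv_le_one_of_one_le₀ (one_le_prodOneAdd hb_nonneg n ω)

end prodOneAdd

theorem condExp_div_prodOneAdd_le {z b ξ ζ : ℕ → Ω → ℝ} {t : ℕ} (hb : Adapted ℱ b)
    (hb_nonneg : ∀ t ω, 0 ≤ b t ω) (hz_int : Integrable (z (t + 1)) μ)
    (hrec : μ[z (t + 1) | ℱ t] ≤ᵐ[μ] fun ω => z t ω * (1 + b t ω) + ξ t ω - ζ t ω) :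
    μ[fun ω => z (t + 1) ω / prodOneAdd b (t + 1) ω | ℱ t] ≤ᵐ[μ]
      fun ω => z t ω / prodOneAdd b t ω + (ξ t ω - ζ t ω) / prodOneAdd b (t + 1) ω := by
  have hpull : μ[fun ω => z (t + 1) ω / prodOneAdd b (t + 1) ω | ℱ t] =ᵐ[μ]
      fun ω => μ[z (t + 1) | ℱ t] ω / prodOneAdd b (t + 1) ω := by
    have hint : Integrable (z (t + 1) * (prodOneAdd b (t + 1))⁻¹) μ :=
      (hz_int.div_prodOneAdd hb hb_nonneg (t + 1)).congr (ae_of_all _ fun _ => div_eq_mul_inv _ _)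
    simp only [div_eq_mul_inv]
    exact condExp_mul_of_stronglyMeasurable_right
      (hb.measurable_prodOneAdd le_rfl).inv.stronglyMeasurable hint hz_int
  filter_upwards [hpull, hrec] with ω hω hle
  have hb_pos : 0 < 1 + b t ω := by linarith [hb_nonneg t ω]
  calc μ[fun ω => z (t + 1) ω / prodOneAdd b (t + 1) ω | ℱ t] ω
      _ = μ[z (t + 1) | ℱ t] ω / prodOneAdd b (t + 1) ω := hω
      _ ≤ (z t ω * (1 + b t ω) + ξ t ω - ζ t ω) / prodOneAdd b (t + 1) ω := by
        gcongr
        exact (one_le_prodOneAdd hb_nonneg _ ω).trans' zero_le_one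
      _ = z t ω / prodOneAdd b t ω + (ξ t ω - ζ t ω) / prodOneAdd b (t + 1) ω := by
        rw [prodOneAdd_succ]
        field_simp
        ring

theorem robbins_siegmund_of_nonneg [IsFiniteMeasure μ] {z b ξ ζ : ℕ → Ω → ℝ}
    (hz_nonneg : ∀ t ω, 0 ≤ z t ω) (hb_nonneg : ∀ t ω, 0 ≤ b t ω)
    (hξ_nonneg : ∀ t ω, 0 ≤ ξ t ω) (hζ_nonneg : ∀ t ω, 0 ≤ ζ t ω)
    (hz : Adapted ℱ z) (hb : Adapted ℱ b) (hξ : Adapted ℱ ξ) (hζ : Adapted ℱ ζ)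
    (hz_int : ∀ t, Integrable (z t) μ) (hξ_int : ∀ t, Integrable (ξ t) μ)
    (hζ_int : ∀ t, Integrable (ζ t) μ)
    (hrec : ∀ t, μ[z (t + 1) | ℱ t] ≤ᵐ[μ] fun ω => z t ω * (1 + b t ω) + ξ t ω - ζ t ω)
    (hb_sum : ∀ᵐ ω ∂μ, Summable fun t => b t ω) (hξ_sum : ∀ᵐ ω ∂μ, Summable fun t => ξ t ω) :
    ∀ᵐ ω ∂μ, (∃ l, Tendsto (fun t => z t ω) atTop (𝓝 l)) ∧ Summable fun t => ζ t ω := by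
  set α := prodOneAdd b
  have hα_pos : ∀ t ω, 0 < α t ω := fun t ω =>
    zero_lt_one.trans_le (one_le_prodOneAdd hb_nonneg t ω)
  have hX : Supermartingale
      (fun t ω => z t ω / α t ω - ∑ s ∈ range t, (ξ s ω - ζ s ω) / α (s + 1) ω) ℱ μ :=
    supermartingale_sub_sum_of_condExp_le
      (fun t => (hz t).div (hb.measurable_prodOneAdd t.le_succ))
      (fun t => ((hξ t).sub (hζ t)).div (hb.measurable_prodOneAdd le_rfl))
      (fun t => (hz_int t).div_prodOneAdd hb hb_nonneg t)
      (fun t => ((hξ_int t).sub (hζ_int t)).div_prodOneAdd hb hb_nonneg (t + 1))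
      fun t => condExp_div_prodOneAdd_le hb hb_nonneg (hz_int (t + 1)) (hrec t)
  have hX_conv := hX.ae_tendsto_of_neg_sum_le (ξ := fun t ω => ξ t ω / α (t + 1) ω)
    (fun t => (hξ t).div (hb.measurable_prodOneAdd le_rfl))
    (fun t ω => div_nonneg (hξ_nonneg t ω) (hα_pos _ ω).le) fun t ω => by
      have hζ_sum : 0 ≤ ∑ s ∈ range t, ζ s ω / α (s + 1) ω :=
        sum_nonneg fun s _ => div_nonneg (hζ_nonneg s ω) (hα_pos _ ω).le
      simp only [sub_div, sum_sub_distrib]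
      linarith [div_nonneg (hz_nonneg t ω) (hα_pos t ω).le]
  filter_upwards [hX_conv, hb_sum, hξ_sum] with ω hXω hbω hξω
  have hξ' : Summable fun t => ξ t ω / α (t + 1) ω :=
    hξω.of_nonneg_of_le (fun t => div_nonneg (hξ_nonneg t ω) (hα_pos _ ω).le)
      fun t => div_le_self (hξ_nonneg t ω) (one_le_prodOneAdd hb_nonneg _ ω)
  obtain ⟨c, hc⟩ := hXω hξ'
  obtain ⟨hζ', l, hl⟩ := summable_and_exists_tendsto_of_tendsto_add_sum
    (fun t => div_nonneg (hz_nonneg t ω) (hα_pos t ω).le)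
    (fun t => div_nonneg (hζ_nonneg t ω) (hα_pos _ ω).le)
    ((hc.add hξ'.hasSum.tendsto_sum_nat).congr fun t => by
      simp only [sub_div, sum_sub_distrib]
      ring)
  obtain ⟨A, hA⟩ := exists_tendsto_prodOneAdd hbω
  obtain ⟨M, hM⟩ := hA.bddAbove_range
  refine ⟨⟨l * A, (hl.mul hA).congr fun t => div_mul_cancel₀ _ (hα_pos t ω).ne'⟩, ?_⟩
  refine (hζ'.mul_right M).of_nonneg_of_le (hζ_nonneg · ω) fun t => ?_
  calc ζ t ω = ζ t ω / α (t + 1) ω * α (t + 1) ω := (div_mul_cancel₀ _ (hα_pos _ ω).ne').symm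
    _ ≤ ζ t ω / α (t + 1) ω * M := by
      gcongr
      · exact div_nonneg (hζ_nonneg t ω) (hα_pos _ ω).le
      · exact hM (Set.mem_range_self _)

end MeasureTheory

theorem robbins_siegmund_general
    {Ω : Type*} {m0 : MeasurableSpace Ω} (μ : Measure Ω) [IsProbabilityMeasure μ]
    (ℱ : Filtration ℕ m0)
    (z b ξ ζ : ℕ → Ω → ℝ)
    (hz_nonneg : ∀ t, 0 ≤ᵐ[μ] z t) (hb_nonneg : ∀ t, 0 ≤ᵐ[μ] b t)
    (hξ_nonneg : ∀ t, 0 ≤ᵐ[μ] ξ t) (hζ_nonneg : ∀ t, 0 ≤ᵐ[μ] ζ t)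
    (hz_adapted : Adapted ℱ z) (hb_adapted : Adapted ℱ b)
    (hξ_adapted : Adapted ℱ ξ) (hζ_adapted : Adapted ℱ ζ)
    (hz_int : ∀ t, Integrable (z t) μ)
    (hξ_int : ∀ t, Integrable (ξ t) μ) (hζ_int : ∀ t, Integrable (ζ t) μ)
    (hrec : ∀ t, μ[z (t + 1) | ℱ t] ≤ᵐ[μ]
      fun ω => z t ω * (1 + b t ω) + ξ t ω - ζ t ω)
    (hb_sum : ∀ᵐ ω ∂μ, Summable (fun t => b t ω))
    (hξ_sum : ∀ᵐ ω ∂μ, Summable (fun t => ξ t ω)) :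
    ∀ᵐ ω ∂μ, (∃ l : ℝ, Tendsto (fun t => z t ω) atTop (nhds l)) ∧
      Summable (fun t => ζ t ω) := by
  -- replace each process by its positive part, which changes it only on a null set
  set P : (ℕ → Ω → ℝ) → ℕ → Ω → ℝ := fun f t ω => max (f t ω) 0
  have hP_nonneg : ∀ f t ω, 0 ≤ P f t ω := fun _ _ _ => le_max_right _ _
  have hP_adapted : ∀ f, Adapted ℱ f → Adapted ℱ (P f) := fun _ hf t => (hf t).max measurable_const
  have hP_ae : ∀ f, (∀ t, 0 ≤ᵐ[μ] f t) → ∀ t, P f t =ᵐ[μ] f t := fun _ hf t =>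
    (hf t).mono fun _ h => max_eq_left h
  have hrec' : ∀ t, μ[P z (t + 1) | ℱ t] ≤ᵐ[μ]
      fun ω => P z t ω * (1 + P b t ω) + P ξ t ω - P ζ t ω := fun t => by
    filter_upwards [condExp_congr_ae (m := ℱ t) (hP_ae z hz_nonneg (t + 1)), hrec t,
      hP_ae z hz_nonneg t, hP_ae b hb_nonneg t, hP_ae ξ hξ_nonneg t, hP_ae ζ hζ_nonneg t]
      with ω hcond hle hz hb hξ hζ
    rwa [hcond, hz, hb, hξ, hζ]
  have hsum_congr : ∀ f, (∀ t, 0 ≤ᵐ[μ] f t) → (∀ᵐ ω ∂μ, Summable fun t => f t ω) →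
      ∀ᵐ ω ∂μ, Summable fun t => P f t ω := fun f hf hsum => by
    filter_upwards [hsum, ae_all_iff.2 (hP_ae f hf)] with ω hω heq
    exact hω.congr fun t => (heq t).symm
  filter_upwards [robbins_siegmund_of_nonneg (hP_nonneg z) (hP_nonneg b) (hP_nonneg ξ)
      (hP_nonneg ζ) (hP_adapted z hz_adapted) (hP_adapted b hb_adapted)
      (hP_adapted ξ hξ_adapted) (hP_adapted ζ hζ_adapted) (fun t => (hz_int t).pos_part)
      (fun t => (hξ_int t).pos_part) (fun t => (hζ_int t).pos_part) hrec'
      (hsum_congr b hb_nonneg hb_sum) (hsum_congr ξ hξ_nonneg hξ_sum),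
    ae_all_iff.2 (hP_ae z hz_nonneg), ae_all_iff.2 (hP_ae ζ hζ_nonneg)]
    with ω ⟨⟨l, hl⟩, hsum⟩ hz hζ
  exact ⟨⟨l, hl.congr hz⟩, hsum.congr hζ⟩

theorem robbins_siegmund
    {Ω : Type*} {m0 : MeasurableSpace Ω} (μ : Measure Ω) [IsProbabilityMeasure μ]
    (ℱ : Filtration ℕ m0)
    (z b ξ ζ : ℕ → Ω → ℝ)
    (hz_nonneg : ∀ t, 0 ≤ᵐ[μ] z t) (hb_nonneg : ∀ t, 0 ≤ᵐ[μ] b t)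
    (hξ_nonneg : ∀ t, 0 ≤ᵐ[μ] ξ t) (hζ_nonneg : ∀ t, 0 ≤ᵐ[μ] ζ t)
    (hz_adapted : Adapted ℱ z) (hb_adapted : Adapted ℱ b)
    (hξ_adapted : Adapted ℱ ξ) (hζ_adapted : Adapted ℱ ζ)
    (hz_int : ∀ t, Integrable (z t) μ) (hb_int : ∀ t, Integrable (b t) μ)
    (hξ_int : ∀ t, Integrable (ξ t) μ) (hζ_int : ∀ t, Integrable (ζ t) μ)
    (hrec : ∀ t, μ[z (t + 1) | ℱ t] ≤ᵐ[μ]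
      fun ω => z t ω * (1 + b t ω) + ξ t ω - ζ t ω)
    (hb_sum : ∀ᵐ ω ∂μ, Summable (fun t => b t ω))
    (hξ_sum : ∀ᵐ ω ∂μ, Summable (fun t => ξ t ω)) :
    ∀ᵐ ω ∂μ, (∃ l : ℝ, Tendsto (fun t => z t ω) atTop (nhds l)) ∧
      Summable (fun t => ζ t ω) :=
  robbins_siegmund_general μ ℱ z b ξ ζ hz_nonneg hb_nonneg hξ_nonneg hζ_nonneg hz_adapted hb_adapted
    hξ_adapted hζ_adapted hz_int hξ_int hζ_int hrec hb_sum hξ_sum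
end
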